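/- Let p, q be natural numbers and let k₁ ≥ … ≥ k_p ≥ 1 and l₁ ≥ … ≥ l_q ≥ 1 be weakly decreasing tuples of positive integers. If ∑_{i=1}^p (k_i − 1) = ∑_{j=1}^q (l_j − 1) and ∏_{i=1}^p (2^{2k_i−1}+1) = ∏_{j=1}^q (2^{2l_j−1}+1), then p = q and (k₁, …, k_p) = (l₁, …, l_q). -/

import Mathlib

open Polynomial Finset



/-- Evaluation of the cyclotomic polynomial at 2. -/
noncomputable def cycVal (m : ℕ) : ℤ := (Polynomial.cyclotomic m ℤ).eval 2

lemma cycVal_prod_divisors {m : ℕ} (hm : 0 < m) :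
    ∏ d ∈ m.divisors, cycVal d = 2 ^ m - 1 := by
  have h := Polynomial.prod_cyclotomic_eq_X_pow_sub_one hm ℤ
  have := congrArg (Polynomial.eval (2:ℤ)) h
  simpa [Polynomial.eval_prod, cycVal] using this

lemma cycVal_pos {m : ℕ} (hm : 2 < m) : 0 < cycVal m :=
  Polynomial.cyclotomic_pos hm 2

lemma divisors_two_mul {n : ℕ} (hn : Odd n) (h0 : n ≠ 0) :
    (2 * n).divisors = n.divisors ∪ n.divisors.image (2 * ·) := by
  have h2 : ¬ (2 ∣ n) := by
    rintro ⟨c, rfl⟩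
    exact (Nat.not_odd_iff_even.mpr ⟨c, two_mul c⟩) hn
  ext d
  simp only [Nat.mem_divisors, Finset.mem_union, Finset.mem_image]
  constructor
  · rintro ⟨hd, -⟩
    rcases Nat.even_or_odd d with he | ho
    · obtain ⟨e, rfl⟩ := he
      rw [← two_mul] at hd ⊢
      right
      exact ⟨e, ⟨(Nat.mul_dvd_mul_iff_left (by norm_num : 0 < 2)).mp hd, h0⟩, rfl⟩
    · left
      refine ⟨?_, h0⟩
      exact ho.coprime_two_right.dvd_of_dvd_mul_right (by rwa [mul_comm] at hd)
  · rintro (⟨hd, -⟩ | ⟨e, ⟨he, -⟩, rfl⟩)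
    · exact ⟨hd.mul_left 2, by positivity⟩
    · exact ⟨Nat.mul_dvd_mul_left 2 he, by positivity⟩

lemma cycVal_prod_two_mul {n : ℕ} (hn : Odd n) (h0 : 0 < n) :
    ∏ d ∈ n.divisors, cycVal (2 * d) = 2 ^ n + 1 := by
  have hdisj : Disjoint n.divisors (n.divisors.image (2 * ·)) := by
    rw [Finset.disjoint_left]
    intro a ha hb
    obtain ⟨e, -, rfl⟩ := Finset.mem_image.mp hb
    have : (2:ℕ) ∣ n := dvd_trans ⟨e, rfl⟩ (Nat.mem_divisors.mp ha).1
    rcases hn with ⟨c, hc⟩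
    omega
  have hinj : Set.InjOn (2 * ·) n.divisors := fun a _ b _ h => by
    simpa using h
  have h1 := cycVal_prod_divisors (m := 2 * n) (by positivity)
  rw [divisors_two_mul hn h0.ne', Finset.prod_union hdisj, Finset.prod_image hinj,
    cycVal_prod_divisors h0] at h1
  have hkey : (2:ℤ) ^ (2 * n) - 1 = (2 ^ n - 1) * (2 ^ n + 1) := by
    rw [two_mul, pow_add]; ring
  rw [hkey] at h1
  have hne : (2:ℤ) ^ n - 1 ≠ 0 := by
    have : (2:ℤ) ^ n ≥ 2 ^ 1 := pow_le_pow_right₀ (by norm_num) h0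
    simp at this ⊢
    omega
  exact mul_left_cancel₀ hne h1

lemma cycVal_dvd_two_pow_add_one {n : ℕ} (hn : Odd n) (h0 : 0 < n) :
    cycVal (2 * n) ∣ 2 ^ n + 1 := by
  rw [← cycVal_prod_two_mul hn h0]
  exact Finset.dvd_prod_of_mem _ (Nat.mem_divisors.mpr ⟨dvd_rfl, h0.ne'⟩)



-- cast lemma
lemma cycVal_cast (m p : ℕ) [Fact p.Prime] :
    ((cycVal m : ℤ) : ZMod p) = (cyclotomic m (ZMod p)).eval 2 := by
  have h := cyclotomic.eval_apply (2:ℤ) m (Int.castRingHom (ZMod p))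
  simpa [cycVal] using h.symm

-- L4
lemma orderOf_eq_of_dvd_cycVal {m p : ℕ} (hm : 0 < m) (hp : p.Prime) (hpm : ¬ p ∣ m)
    (h : (p:ℤ) ∣ cycVal m) : orderOf (2 : ZMod p) = m := by
  haveI : Fact p.Prime := ⟨hp⟩
  haveI : NeZero (m : ZMod p) := ⟨by
    intro hc
    exact hpm ((ZMod.natCast_eq_zero_iff m p).mp hc)⟩
  have hroot : IsRoot (cyclotomic m (ZMod p)) 2 := by
    have : ((cycVal m : ℤ) : ZMod p) = 0 := (ZMod.intCast_zmod_eq_zero_iff_dvd _ p).mpr h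
    rw [cycVal_cast] at this
    exact this
  have hprim : IsPrimitiveRoot (2 : ZMod p) m := (isRoot_cyclotomic_iff).mp hroot
  exact hprim.eq_orderOf.symm

-- L5 pieces
lemma pow_one_add_mul (c : ℤ) (p : ℕ) : ∀ i : ℕ, ∃ d : ℤ,
    (1 + (p:ℤ) * c) ^ i = 1 + i * p * c + p^2 * d := by
  intro i
  induction i with
  | zero => exact ⟨0, by ring⟩
  | succ j ih =>
    obtain ⟨d, hd⟩ := ih
    refine ⟨d + j * c * c + p * c * d + c * d * 0 + j * c * c * 0 + d * 0, ?_⟩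
    rw [pow_succ, hd]
    push_cast
    ring

-- partial geometric sums
lemma geom_sum_aux (c : ℤ) (p : ℕ) : ∀ s : ℕ, ∃ D : ℤ,
    ∑ i ∈ range s, (1 + (p:ℤ) * c) ^ i
      = s + p * c * (∑ i ∈ range s, (i:ℤ)) + p^2 * D := by
  intro s
  induction s with
  | zero => exact ⟨0, by simp⟩
  | succ t ih =>
    obtain ⟨D, hD⟩ := ih
    obtain ⟨d, hd⟩ := pow_one_add_mul c p t
    refine ⟨D + d, ?_⟩
    rw [Finset.sum_range_succ, Finset.sum_range_succ, hD, hd]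
    push_cast
    ring

-- geometric sum ≡ p (mod p²)
lemma geom_sum_mod (p : ℕ) (hp : p.Prime) (hp2 : p ≠ 2) (c : ℤ) :
    ∃ D : ℤ, ∑ i ∈ range p, (1 + (p:ℤ) * c) ^ i = p + p^2 * D := by
  obtain ⟨r, hr⟩ : ∃ r, p = 2 * r + 1 := hp.odd_of_ne_two hp2
  obtain ⟨D, hD⟩ := geom_sum_aux c p p
  have hid : (∑ i ∈ range p, (i:ℤ)) = (p:ℤ) * r := by
    have h2 := Finset.sum_range_id_mul_two p
    have h3 : (∑ i ∈ range p, i) * 2 = (p * r) * 2 := by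
      rw [h2, hr]; simp [Nat.mul_sub_one]; ring
    have : (∑ i ∈ range p, i) = p * r := by omega
    rw [← Nat.cast_sum, this]
    push_cast
    ring
  refine ⟨c * r + D, ?_⟩
  rw [hD, hid]
  push_cast
  ring

-- L5
lemma not_sq_dvd_cycVal {m p : ℕ} (hp : p.Prime) (hp2 : p ≠ 2) (hpm : p ∣ m) (hm : 0 < m)
    (hdvd : (p:ℤ) ∣ cycVal m) : ¬ ((p:ℤ)^2 ∣ cycVal m) := by
  haveI : Fact p.Prime := ⟨hp⟩
  set q := m / p with hqdef
  have hqm : q * p = m := Nat.div_mul_cancel hpm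
  have hq0 : 0 < q := by
    rcases Nat.eq_zero_or_pos q with h | h
    · rw [h] at hqm; omega
    · exact h
  have hqlt : q < m := by
    have := hp.two_le
    nlinarith [hqm]
  have hmem : q ∈ m.properDivisors := Nat.mem_properDivisors.mpr ⟨⟨p, hqm.symm⟩, hqlt⟩
  obtain ⟨g, hg⟩ := X_pow_sub_one_mul_cyclotomic_dvd_X_pow_sub_one_of_dvd ℤ hmem
  have hev : (2:ℤ)^m - 1 = ((2:ℤ)^q - 1) * cycVal m * g.eval 2 := by
    have := congrArg (eval (2:ℤ)) hg
    simpa [cycVal] using this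
  have hgeom : ((2:ℤ)^q - 1) * (∑ i ∈ range p, ((2:ℤ)^q)^i) = 2^m - 1 := by
    have h := geom_sum_mul ((2:ℤ)^q) p
    rw [← pow_mul, hqm] at h
    linarith [h]
  have hne : (2:ℤ)^q - 1 ≠ 0 := by
    have : (2:ℤ)^1 ≤ 2^q := pow_le_pow_right₀ (by norm_num) hq0
    simp at this; omega
  have hSdvd : cycVal m ∣ ∑ i ∈ range p, ((2:ℤ)^q)^i := by
    refine ⟨g.eval 2, ?_⟩
    apply mul_left_cancel₀ hne
    rw [hgeom, hev]; ring
  have h2ne : (2 : ZMod p) ≠ 0 := by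
    have : ¬ p ∣ 2 := fun h => hp2 ((Nat.prime_dvd_prime_iff_eq hp Nat.prime_two).mp h)
    intro hc
    exact this ((ZMod.natCast_eq_zero_iff 2 p).mp (by exact_mod_cast hc))
  set e := orderOf (2 : ZMod p) with hedef
  have hPdvd2m : cycVal m ∣ (2:ℤ)^m - 1 := ⟨((2:ℤ)^q - 1) * g.eval 2, by rw [hev]; ring⟩
  have hpm2 : (p:ℤ) ∣ (2:ℤ)^m - 1 := dvd_trans hdvd hPdvd2m
  have h2m : (2 : ZMod p)^m = 1 := by
    have : (((2:ℤ)^m - 1 : ℤ) : ZMod p) = 0 := (ZMod.intCast_zmod_eq_zero_iff_dvd _ p).mpr hpm2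
    push_cast at this
    linear_combination this
  have hem : e ∣ m := orderOf_dvd_of_pow_eq_one h2m
  have hep : e ∣ p - 1 := orderOf_dvd_of_pow_eq_one (ZMod.pow_card_sub_one_eq_one h2ne)
  have hcop : Nat.Coprime e p := by
    rw [Nat.coprime_comm]
    refine (Nat.Prime.coprime_iff_not_dvd hp).mpr ?_
    intro hpe
    have h2le := hp.two_le
    have := Nat.le_of_dvd (by omega) (hpe.trans hep)
    omega
  have heq : e ∣ q := hcop.dvd_of_dvd_mul_right (by rwa [← hqm] at hem)
  have h2q : (2 : ZMod p)^q = 1 := orderOf_dvd_iff_pow_eq_one.mp heq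
  have hpq : (p:ℤ) ∣ (2:ℤ)^q - 1 := by
    rw [← ZMod.intCast_zmod_eq_zero_iff_dvd]
    push_cast
    linear_combination h2q
  obtain ⟨c, hc⟩ := hpq
  have hy : (2:ℤ)^q = 1 + p*c := by linarith
  obtain ⟨D, hD⟩ := geom_sum_mod p hp hp2 c
  intro hsq
  have hfin : (p:ℤ)^2 ∣ ∑ i ∈ range p, ((2:ℤ)^q)^i := dvd_trans hsq hSdvd
  rw [hy, hD] at hfin
  have hpp : (p:ℤ)^2 ∣ (p:ℤ) := by
    have h1 : (p:ℤ)^2 ∣ (p:ℤ)^2 * D := Dvd.intro D rfl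
    have := dvd_sub hfin h1
    simpa using this
  have := Int.le_of_dvd (by exact_mod_cast hp.pos) hpp
  have h2 := hp.two_le
  push_cast at this
  nlinarith




section helpers

lemma le_two_pow_pred (p : ℕ) (h : 1 ≤ p) : p ≤ 2 ^ (p - 1) := by
  have := Nat.lt_two_pow_self (n := p - 1)
  omega

lemma five_le_two_pow (l : ℕ) (h : 5 ≤ l) : l ≤ 2 ^ (l - 2) := by
  induction l with
  | zero => omega
  | succ m ih =>
    rcases Nat.lt_or_ge m 5 with hm | hm
    · have hm4 : m = 4 := by omega
      subst hm4; norm_num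
    · have h1 := ih (by omega)
      have : m + 1 - 2 = (m - 2) + 1 := by omega
      rw [this, pow_succ]
      omega

lemma totient_two_le {u : ℕ} (hu : 3 ≤ u) : 2 ≤ u.totient := by
  have he : Even u.totient := Nat.totient_even (by omega)
  have hp : 0 < u.totient := Nat.totient_pos.mpr (by omega)
  rcases he with ⟨t, ht⟩
  omega

lemma odd_le_two_pow_totient : ∀ u : ℕ, Odd u → u ≤ 2 ^ u.totient := by
  intro u
  induction u using Nat.strong_induction_on with
  | _ u ih =>
    intro hu
    have hu0 : u ≠ 0 := by rintro rfl; simp at hu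
    rcases eq_or_ne u 1 with rfl | hu1
    · norm_num
    have hp : u.minFac.Prime := Nat.minFac_prime hu1
    set p := u.minFac with hpdef
    have hpu : p ∣ u := Nat.minFac_dvd u
    have hp2 : p ≠ 2 := by
      rintro h
      rw [h] at hpu
      rcases hu with ⟨c, hc⟩
      omega
    have hp3 : 3 ≤ p := by
      have := hp.two_le
      omega
    set k := u.factorization p with hkdef
    have hk1 : 1 ≤ k := (Nat.Prime.factorization_pos_of_dvd hp hu0 hpu)
    have hAB : p ^ k * (u / p ^ k) = u := Nat.ordProj_mul_ordCompl_eq_self u p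
    set A := p ^ k with hAdef
    set B := u / p ^ k with hBdef
    have hcop : Nat.Coprime A B := Nat.Coprime.pow_left k (Nat.coprime_ordCompl hp hu0)
    have hBdvd : B ∣ u := Dvd.intro_left A hAB
    have hBodd : Odd B := by
      rcases Nat.even_or_odd B with hev | hod
      · exfalso
        have h2B : (2:ℕ) ∣ B := hev.two_dvd
        have h2u : (2:ℕ) ∣ u := h2B.trans hBdvd
        rcases hu with ⟨c, hc⟩
        omega
      · exact hod
    have hBpos : 0 < B := by
      rcases hBodd with ⟨c, hc⟩; omega
    have hA2 : 2 ≤ A := le_trans hp.two_le (Nat.le_self_pow (by omega) p)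
    -- bound for the prime power part
    have hAbound : A ≤ 2 ^ A.totient := by
      rw [hAdef, Nat.totient_prime_pow hp (by omega)]
      calc p ^ k ≤ (2 ^ (p-1)) ^ k := Nat.pow_le_pow_left (le_two_pow_pred p (by omega)) k
        _ = 2 ^ ((p-1) * k) := by rw [← pow_mul]
        _ ≤ 2 ^ (p ^ (k-1) * (p-1)) := by
            apply Nat.pow_le_pow_right (by norm_num)
            have hkp : k ≤ p ^ (k - 1) := by
              calc k ≤ 2 ^ (k-1) := le_two_pow_pred k (by omega)
                _ ≤ p ^ (k-1) := Nat.pow_le_pow_left hp.two_le _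
            calc (p-1) * k ≤ (p-1) * p ^ (k-1) := Nat.mul_le_mul_left _ hkp
              _ = p ^ (k-1) * (p-1) := by ring
    rcases eq_or_ne B 1 with hB1 | hB1
    · have huA : u = A := by rw [← hAB, hB1, mul_one]
      rw [huA]
      exact hAbound
    have hB3 : 3 ≤ B := by
      rcases hBodd with ⟨c, hc⟩
      omega
    have hBlt : B < u := by
      have h1 : 1 * B < A * B := (Nat.mul_lt_mul_right hBpos).mpr (by omega)
      rw [one_mul, hAB] at h1
      exact h1
    have hBbound : B ≤ 2 ^ B.totient := ih B hBlt hBodd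
    have htot : u.totient = A.totient * B.totient := by
      rw [← hAB]
      exact Nat.totient_mul hcop
    have hA3 : 3 ≤ A := le_trans hp3 (Nat.le_self_pow (by omega) p)
    have hAt : 2 ≤ A.totient := totient_two_le hA3
    have hBt : 2 ≤ B.totient := totient_two_le hB3
    calc u = A * B := hAB.symm
      _ ≤ 2 ^ A.totient * 2 ^ B.totient := Nat.mul_le_mul hAbound hBbound
      _ = 2 ^ (A.totient + B.totient) := by rw [← pow_add]
      _ ≤ 2 ^ (A.totient * B.totient) := by
          apply Nat.pow_le_pow_right (by norm_num)
          nlinarith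
      _ = 2 ^ u.totient := by rw [htot]

lemma eight_cube_le (n : ℕ) (h : 5 ≤ n) : 8 * n ^ 3 ≤ 4 ^ n := by
  induction n with
  | zero => omega
  | succ m ih =>
    rcases Nat.lt_or_ge m 5 with hm | hm
    · have hm4 : m = 4 := by omega
      subst hm4; norm_num
    · have h1 := ih (by omega)
      have hmm : 5 * m ≤ m * m := by nlinarith
      have hmmm : 5 * (m * m) ≤ m * (m * m) := by nlinarith
      have h2 : 8 * (m+1)^3 ≤ 4 * (8 * m^3) := by nlinarith
      calc 8 * (m+1)^3 ≤ 4 * (8 * m^3) := h2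
        _ ≤ 4 * 4 ^ m := by omega
        _ = 4 ^ (m+1) := by rw [pow_succ]; ring

lemma key_pow_ineq {n w : ℕ} (h5 : 5 ≤ n) (hw : 3 * w ≤ n) : n * 2 ^ (w + 1) ≤ 2 ^ n := by
  rw [← Nat.pow_le_pow_iff_left (n := 3) (by norm_num)]
  calc (n * 2 ^ (w+1)) ^ 3 = n^3 * 2 ^ (3*w+3) := by ring
    _ ≤ n^3 * 2 ^ (n + 3) := by
        apply Nat.mul_le_mul_left
        apply Nat.pow_le_pow_right (by norm_num)
        omega
    _ = 8 * n^3 * 2 ^ n := by rw [pow_add]; ring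
    _ ≤ 4 ^ n * 2 ^ n := Nat.mul_le_mul_right _ (eight_cube_le n h5)
    _ = (2^n)^3 := by
        rw [show (4:ℕ) = 2^2 by norm_num, ← pow_mul, ← pow_add, ← pow_mul]
        congr 1
        ring

end helpers

lemma size_prime_pow {l a : ℕ} (hl : l.Prime) (hl2 : l ≠ 2) (ha : 1 ≤ a)
    (h5 : 5 ≤ l ^ a) : ((l ^ a : ℕ) : ℤ) < cycVal (2 * l ^ a) := by
  have hlodd : Odd l := hl.odd_of_ne_two hl2
  have hl3 : 3 ≤ l := by have := hl.two_le; rcases hlodd with ⟨c, hc⟩; omega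
  have hpos : 0 < l ^ a := Nat.pow_pos hl.pos
  have hodd : Odd (l ^ a) := hlodd.pow
  have hodd' : Odd (l ^ (a-1)) := hlodd.pow
  have hid1 := cycVal_prod_two_mul hodd hpos
  have hid0 := cycVal_prod_two_mul hodd' (Nat.pow_pos hl.pos)
  have hr1 : ∏ d ∈ (l ^ a).divisors, cycVal (2*d) = ∏ i ∈ range (a+1), cycVal (2 * l ^ i) := by
    rw [Nat.divisors_prime_pow hl, Finset.prod_map]
    rfl
  have hr0 : ∏ d ∈ (l ^ (a-1)).divisors, cycVal (2*d)
      = ∏ i ∈ range ((a-1)+1), cycVal (2 * l ^ i) := by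
    rw [Nat.divisors_prime_pow hl, Finset.prod_map]
    rfl
  have ha1 : (a-1)+1 = a := by omega
  rw [hr1] at hid1
  rw [hr0, ha1] at hid0
  have hsucc := Finset.prod_range_succ (fun i => cycVal (2 * l ^ i)) a
  rw [hsucc, hid0] at hid1
  -- hid1 : (2 ^ l^(a-1) + 1) * cycVal (2 * l ^ a) = 2 ^ l ^ a + 1
  set w := l ^ (a-1) with hwdef
  set n := l ^ a with hndef
  have hlw : l * w = n :=
    ((pow_succ' l (a-1)).symm.trans (congrArg (l ^ ·) ha1) : l * l ^ (a-1) = l ^ a)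
  have h3w : 3 * w ≤ n := by
    calc 3 * w ≤ l * w := Nat.mul_le_mul_right w hl3
      _ = n := hlw
  have hkey : (n:ℕ) * 2 ^ (w+1) ≤ 2 ^ n := key_pow_ineq h5 h3w
  by_contra hle
  push_neg at hle
  have hwpos : (0:ℤ) < 2 ^ w + 1 := by positivity
  have hNpos : 0 < cycVal (2 * n) := cycVal_pos (by omega)
  have hchain : (2:ℤ) ^ n + 1 ≤ (n:ℤ) * (2 ^ w + 1) := by
    calc (2:ℤ) ^ n + 1 = (2 ^ w + 1) * cycVal (2 * n) := hid1.symm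
      _ ≤ (2 ^ w + 1) * (n:ℤ) := by
          apply mul_le_mul_of_nonneg_left hle (by positivity)
      _ = (n:ℤ) * (2 ^ w + 1) := by ring
  have hcast : ((n:ℕ):ℤ) * (2 ^ w + 1) ≤ ((n:ℕ):ℤ) * 2 ^ (w+1) := by
    have : (2:ℤ) ^ w + 1 ≤ 2 ^ (w+1) := by
      have h1 : (1:ℤ) ≤ 2 ^ w := one_le_pow₀ (by norm_num)
      rw [pow_succ]
      omega
    exact mul_le_mul_of_nonneg_left this (by positivity)
  have hcast2 : ((n:ℕ):ℤ) * 2 ^ (w+1) ≤ 2 ^ n := by exact_mod_cast hkey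
  omega

lemma exp_combine {l φ' : ℕ} (hl5 : 5 ≤ l) (hφ : 2 ≤ φ') : (l-2) + φ' ≤ (l-2) * φ' := by
  have h3 : 3 ≤ l - 2 := by omega
  set t := l - 2
  nlinarith

lemma lu_le {l u φ' : ℕ} (hl5 : 5 ≤ l) (hφ : 2 ≤ φ') (hu : u ≤ 2^φ') :
    l * u ≤ 2 ^ ((l-2) * φ') :=
  calc l * u ≤ 2^(l-2) * 2^φ' := Nat.mul_le_mul (five_le_two_pow l hl5) hu
    _ = 2^((l-2) + φ') := (pow_add 2 _ _).symm
    _ ≤ 2^((l-2)*φ') := Nat.pow_le_pow_right (by norm_num) (exp_combine hl5 hφ)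

lemma totient_two_mul_odd {u : ℕ} (hu : Odd u) : (2*u).totient = u.totient := by
  rw [Nat.totient_mul (Nat.coprime_two_left.mpr hu), Nat.totient_two, one_mul]

lemma cycVal_upper {m : ℕ} (hm : 3 ≤ m) : cycVal m < 3 ^ m.totient := by
  have h := Polynomial.cyclotomic_eval_lt_add_one_pow_totient (n := m) (q := (2:ℝ)) hm one_lt_two
  have h2 := cyclotomic.eval_apply (2 : ℤ) m (algebraMap ℤ ℝ)
  simp only [algebraMap_int_eq, eq_intCast, Int.cast_two] at h2
  rw [h2] at h
  norm_num at h
  exact_mod_cast h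

lemma cycVal_eval_lower {u l : ℕ} (hu : 2 ≤ u) (hl : 1 ≤ l) :
    ((2:ℤ)^l - 1) ^ (2*u).totient < (cyclotomic (2*u) ℤ).eval ((2:ℤ)^l) := by
  have h := Polynomial.sub_one_pow_totient_lt_natAbs_cyclotomic_eval (n := 2*u) (q := 2^l)
    (by omega)
    (by have : 2 ≤ 2^l := by calc 2 = 2^1 := rfl
                                _ ≤ 2^l := Nat.pow_le_pow_right (by norm_num) hl
        omega)
  have hcast : (((2:ℕ)^l : ℕ) : ℤ) = (2:ℤ)^l := by push_cast; rfl
  rw [hcast] at h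
  have hpos : 0 < (cyclotomic (2*u) ℤ).eval ((2:ℤ)^l) := by
    apply Polynomial.cyclotomic_pos (by omega)
  have habs : (((cyclotomic (2*u) ℤ).eval ((2:ℤ)^l)).natAbs : ℤ)
      = (cyclotomic (2*u) ℤ).eval ((2:ℤ)^l) := Int.natAbs_of_nonneg hpos.le
  have h' : (((2^l - 1 : ℕ)) ^ (2*u).totient : ℤ) < (((cyclotomic (2*u) ℤ).eval ((2:ℤ)^l)).natAbs : ℤ) := by
    exact_mod_cast h
  rw [habs] at h'
  have hc2 : (((2^l - 1 : ℕ)) : ℤ) = (2:ℤ)^l - 1 := by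
    have : 1 ≤ 2^l := Nat.one_le_two_pow
    push_cast [this]
    ring
  rw [← hc2]
  exact_mod_cast h'

lemma size_mul {l u : ℕ} (hl : l.Prime) (hl5 : 5 ≤ l) (hu : Odd u) (hu3 : 3 ≤ u)
    (hlu : ¬ l ∣ u) : ((l * u : ℕ) : ℤ) < cycVal (2 * (l * u)) := by
  have hl2 : l ≠ 2 := by omega
  have hnotdvd : ¬ l ∣ 2 * u := by
    intro h
    exact hlu ((Nat.Coprime.dvd_of_dvd_mul_left
      ((Nat.coprime_primes hl Nat.prime_two).mpr (by omega)) h))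
  have hexp := cyclotomic_expand_eq_cyclotomic_mul (p := l) (n := 2*u) hl hnotdvd ℤ
  have hev := congrArg (eval (2:ℤ)) hexp
  rw [expand_eval, eval_mul] at hev
  have hidx : 2*u*l = 2*(l*u) := by ring
  rw [hidx] at hev
  -- hev : (cyclotomic (2u) ℤ).eval (2^l) = cycVal (2(lu)) * cycVal (2u)
  have hφ : (2*u).totient = u.totient := totient_two_mul_odd hu
  have hφ2 : 2 ≤ u.totient := totient_two_le hu3
  have hlow := cycVal_eval_lower (u := u) (l := l) (by omega) (by omega)
  have hupper : cycVal (2*u) < 3 ^ (2*u).totient := cycVal_upper (by omega)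
  have hNpos : 0 < cycVal (2 * (l*u)) := cycVal_pos (by nlinarith)
  have hPpos : 0 < cycVal (2*u) := cycVal_pos (by omega)
  by_contra hle
  push_neg at hle
  -- E ≤ n * 3^φ
  have hEub : (cyclotomic (2*u) ℤ).eval ((2:ℤ)^l) ≤ ((l*u : ℕ):ℤ) * 3 ^ (2*u).totient := by
    rw [hev]
    apply mul_le_mul hle hupper.le hPpos.le (by positivity)
  -- E > 3^φ * n
  have hfact : (3:ℤ) * 2^(l-2) ≤ 2^l - 1 := by
    have h1 : (2:ℤ)^l = 2^(l-2) * 4 := by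
      rw [show (4:ℤ) = 2^2 by norm_num, ← pow_add]
      congr 1
      omega
    have h2 : (1:ℤ) ≤ 2^(l-2) := one_le_pow₀ (by norm_num)
    omega
  have hlu2 : ((l*u:ℕ):ℤ) ≤ 2 ^ ((l-2) * u.totient) := by
    exact_mod_cast Nat.cast_le.mpr (lu_le hl5 hφ2 (odd_le_two_pow_totient u hu))
  have hElb : ((l*u : ℕ):ℤ) * 3 ^ (2*u).totient < (cyclotomic (2*u) ℤ).eval ((2:ℤ)^l) := by
    calc ((l*u : ℕ):ℤ) * 3 ^ (2*u).totient
        ≤ 2 ^ ((l-2) * u.totient) * 3 ^ (2*u).totient := by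
          apply mul_le_mul_of_nonneg_right hlu2 (by positivity)
      _ = (2 ^ (l-2)) ^ u.totient * 3 ^ u.totient := by rw [hφ, ← pow_mul]
      _ = (3 * 2^(l-2)) ^ u.totient := by rw [mul_pow]; ring
      _ ≤ ((2:ℤ)^l - 1) ^ u.totient := by
          apply pow_le_pow_left₀ (by positivity) hfact
      _ = ((2:ℤ)^l - 1) ^ (2*u).totient := by rw [hφ]
      _ < _ := hlow
  have := hElb.trans_le hEub
  simp at this

lemma size_sq {l v : ℕ} (hl : l.Prime) (hl5 : 5 ≤ l) (hv : Odd v) (hlv : l ∣ v) :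
    ((l * v : ℕ) : ℤ) < cycVal (2 * (l * v)) := by
  have hv5 : 5 ≤ v := le_trans hl5 (Nat.le_of_dvd (by rcases hv with ⟨c,hc⟩; omega) hlv)
  have hexp := cyclotomic_expand_eq_cyclotomic (p := l) (n := 2*v) hl (hlv.mul_left 2) ℤ
  have hev := congrArg (eval (2:ℤ)) hexp
  rw [expand_eval] at hev
  have hidx : 2*v*l = 2*(l*v) := by ring
  rw [hidx] at hev
  -- hev : (cyclotomic (2v) ℤ).eval (2^l) = cycVal (2(lv))
  have hφ : (2*v).totient = v.totient := totient_two_mul_odd hv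
  have hφ2 : 2 ≤ v.totient := totient_two_le (by omega)
  have hlow := cycVal_eval_lower (u := v) (l := l) (by omega) (by omega)
  rw [hev] at hlow
  -- cycVal (2(lv)) > (2^l - 1)^φ(2v)
  refine lt_of_le_of_lt ?_ hlow
  have h2l : (2:ℤ)^(l-1) ≤ 2^l - 1 := by
    have h1 : (2:ℤ)^l = 2^(l-1) * 2 := by
      rw [← pow_succ]
      congr 1
      omega
    have h2 : (1:ℤ) ≤ 2^(l-1) := one_le_pow₀ (by norm_num)
    omega
  have hcomb : (l-2) + v.totient ≤ (l-1) * v.totient := by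
    have := exp_combine (l := l) (φ' := v.totient) hl5 hφ2
    have hmono : (l-2) * v.totient ≤ (l-1) * v.totient :=
      Nat.mul_le_mul_right _ (by omega)
    omega
  calc ((l*v : ℕ):ℤ) ≤ 2 ^ ((l-2) + v.totient) := by
        rw [pow_add]
        exact_mod_cast Nat.cast_le.mpr (Nat.mul_le_mul (five_le_two_pow l hl5)
          (odd_le_two_pow_totient v hv))
    _ ≤ 2 ^ ((l-1) * v.totient) := by
        apply pow_le_pow_right₀ (by norm_num) hcomb
    _ = ((2:ℤ) ^ (l-1)) ^ v.totient := by rw [pow_mul]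
    _ ≤ ((2:ℤ)^l - 1) ^ v.totient := pow_le_pow_left₀ (by positivity) h2l _
    _ = ((2:ℤ)^l - 1) ^ (2*v).totient := by rw [hφ]

lemma size_main {n : ℕ} (hn : Odd n) (h5 : 5 ≤ n) : (n : ℤ) < cycVal (2*n) := by
  have hn0 : n ≠ 0 := by omega
  by_cases hall : ∀ q, Nat.Prime q → q ∣ n → q = 3
  · have h3 := Nat.eq_prime_pow_of_unique_prime_dvd hn0 (fun {d} hd hdn => hall d hd hdn)
    have ha : 1 ≤ n.primeFactorsList.length := by
      rcases Nat.eq_zero_or_pos n.primeFactorsList.length with h | h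
      · rw [h, pow_zero] at h3; omega
      · exact h
    have := size_prime_pow (l := 3) (a := n.primeFactorsList.length)
      Nat.prime_three (by norm_num) ha (h3 ▸ h5)
    rw [← h3] at this
    exact_mod_cast this
  · push_neg at hall
    obtain ⟨l, hlp, hln, hl3⟩ := hall
    have hl2 : l ≠ 2 := by
      rintro rfl
      rcases hn with ⟨c, hc⟩
      rcases hln with ⟨e, he⟩
      omega
    have hl4 : l ≠ 4 := by
      rintro rfl
      norm_num at hlp
    have hl5 : 5 ≤ l := by
      have := hlp.two_le
      omega
    set u := n / l with hu
    have hun : l * u = n := Nat.mul_div_cancel' hln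
    have hudvd : u ∣ n := Dvd.intro_left l hun
    have huodd : Odd u := by
      rcases Nat.even_or_odd u with hev | hod
      · exfalso
        have h2n : (2:ℕ) ∣ n := (hev.two_dvd).trans hudvd
        rcases hn with ⟨c, hc⟩
        omega
      · exact hod
    by_cases hsq : l ∣ u
    · rw [← hun]
      exact_mod_cast size_sq hlp hl5 huodd hsq
    · rcases eq_or_ne u 1 with hu1 | hu1
      · have hnl : n = l := by rw [← hun, hu1, mul_one]
        subst hnl
        have := size_prime_pow (l := n) (a := 1) hlp hl2 (le_refl 1)
          (by rwa [pow_one])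
        rwa [pow_one] at this
      · have hu3 : 3 ≤ u := by
          rcases huodd with ⟨c, hc⟩
          have : u ≠ 0 := by rintro h; rw [h] at hun; omega
          omega
        rw [← hun]
        exact_mod_cast size_mul hlp hl5 huodd hu3 hsq



lemma bang {n : ℕ} (hodd : Odd n) (h5 : 5 ≤ n) :
    ∃ p : ℕ, p.Prime ∧ p ∣ 2^n + 1 ∧ ∀ m : ℕ, 0 < m → m < n → ¬ p ∣ 2^m + 1 := by
  have hn0 : 0 < n := by omega
  have hNpos : 0 < cycVal (2*n) := cycVal_pos (by omega)
  have hNdvd : cycVal (2*n) ∣ 2^n + 1 := cycVal_dvd_two_pow_add_one hodd hn0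
  have hNgt : (n:ℤ) < cycVal (2*n) := size_main hodd h5
  set N := (cycVal (2*n)).toNat with hNdef
  have hNcast : (N:ℤ) = cycVal (2*n) := Int.toNat_of_nonneg hNpos.le
  have hN0 : N ≠ 0 := by
    intro h
    rw [h] at hNcast
    simp at hNcast
    omega
  have hNdvdN : N ∣ 2^n + 1 := by
    have : (N:ℤ) ∣ ((2^n + 1 : ℕ) : ℤ) := by
      rw [hNcast]
      push_cast
      exact_mod_cast hNdvd
    exact_mod_cast this
  have hmain : ∃ p, p.Prime ∧ p ∣ N ∧ ¬ p ∣ n := by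
    by_contra hcon
    push_neg at hcon
    have hsf : Squarefree N := by
      rw [Nat.squarefree_iff_prime_squarefree]
      intro p hp hpp
      have hpN : p ∣ N := (dvd_mul_right p p).trans hpp
      have hpn : p ∣ n := hcon p hp hpN
      have hp2 : p ≠ 2 := by
        rintro rfl
        rcases hodd with ⟨c, hc⟩
        rcases hpn with ⟨e, he⟩
        omega
      have hdvd1 : (p:ℤ) ∣ cycVal (2*n) := by
        rw [← hNcast]
        exact_mod_cast Int.natCast_dvd_natCast.mpr hpN
      have hdvd2 : (p:ℤ)^2 ∣ cycVal (2*n) := by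
        rw [← hNcast]
        have : ((p*p : ℕ) : ℤ) ∣ (N:ℤ) := Int.natCast_dvd_natCast.mpr hpp
        push_cast at this
        rw [sq]
        exact this
      exact not_sq_dvd_cycVal hp hp2 (Dvd.dvd.mul_left hpn 2) (by omega) hdvd1 hdvd2
    have hNn : N ∣ n := by
      rw [← Nat.factorization_le_iff_dvd hN0 (by omega)]
      intro p
      rcases Nat.eq_zero_or_pos (N.factorization p) with h0 | hpos
      · simp [h0]
      · have hpsup : p ∈ N.factorization.support := Finsupp.mem_support_iff.mpr hpos.ne'
        rw [Nat.support_factorization] at hpsup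
        have hp : p.Prime := Nat.prime_of_mem_primeFactors hpsup
        have hpdvd : p ∣ N := Nat.dvd_of_mem_primeFactors hpsup
        have h1 : N.factorization p ≤ 1 := hsf.natFactorization_le_one p
        have h2 : 1 ≤ n.factorization p :=
          (Nat.Prime.factorization_pos_of_dvd hp (by omega) (hcon p hp hpdvd))
        omega
    have hle := Nat.le_of_dvd hn0 hNn
    have : (N:ℤ) ≤ (n:ℤ) := by exact_mod_cast hle
    omega
  obtain ⟨p, hp, hpN, hpn⟩ := hmain
  haveI : Fact p.Prime := ⟨hp⟩
  have hp2 : p ≠ 2 := by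
    rintro rfl
    have h2 : (2:ℕ) ∣ 2^n + 1 := hpN.trans hNdvdN
    have : (2:ℕ) ∣ 2^n := dvd_pow_self 2 (by omega)
    omega
  have hp2n : ¬ p ∣ 2*n := by
    intro h
    rcases (Nat.Prime.dvd_mul hp).mp h with h2 | hn
    · exact hp2 ((Nat.prime_dvd_prime_iff_eq hp Nat.prime_two).mp h2)
    · exact hpn hn
  have hord : orderOf (2 : ZMod p) = 2*n := by
    apply orderOf_eq_of_dvd_cycVal (by omega) hp hp2n
    rw [← hNcast]
    exact_mod_cast Int.natCast_dvd_natCast.mpr hpN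
  refine ⟨p, hp, hpN.trans hNdvdN, ?_⟩
  intro m hm0 hmn hdvd
  have h1 : ((2^m + 1 : ℕ) : ZMod p) = 0 := (ZMod.natCast_eq_zero_iff _ p).mpr hdvd
  push_cast at h1
  have h2 : (2 : ZMod p)^(2*m) = 1 := by
    rw [two_mul, pow_add]
    have : (2 : ZMod p)^m = -1 := by linear_combination h1
    rw [this]
    ring
  have h3 : 2*n ∣ 2*m := hord ▸ orderOf_dvd_of_pow_eq_one h2
  have := Nat.le_of_dvd (by omega) h3
  omega



lemma factor_ge_three {x : ℕ} (hx : 1 ≤ x) : 3 ≤ 2 ^ (2*x-1) + 1 := by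
  have h : 2 ≤ 2^(2*x-1) := by
    calc 2 = 2^1 := rfl
      _ ≤ 2^(2*x-1) := Nat.pow_le_pow_right (by norm_num) (by omega)
  omega

lemma prod_pos_aux (l : List ℕ) : 0 < (l.map (fun x => 2 ^ (2*x-1)+1)).prod := by
  apply List.prod_pos
  intro a ha
  simp only [List.mem_map] at ha
  obtain ⟨x, -, rfl⟩ := ha
  positivity

lemma contra_case (a b : ℕ) (k l : List ℕ)
    (hk : (a :: k).Pairwise (· ≥ ·)) (hl : (b :: l).Pairwise (· ≥ ·))
    (hkpos : ∀ x ∈ a :: k, 1 ≤ x) (hlpos : ∀ x ∈ b :: l, 1 ≤ x)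
    (hsum : ((a :: k).map (fun x => x - 1)).sum = ((b :: l).map (fun x => x - 1)).sum)
    (hprod : ((a :: k).map (fun x => 2 ^ (2 * x - 1) + 1)).prod
           = ((b :: l).map (fun x => 2 ^ (2 * x - 1) + 1)).prod)
    (hba : b < a) : False := by
  have ha1 : 1 ≤ a := hkpos a (List.mem_cons_self)
  have hb1 : 1 ≤ b := hlpos b (List.mem_cons_self)
  have ha2 : 2 ≤ a := by omega
  have hlle : ∀ x ∈ b :: l, x ≤ b := by
    intro x hx
    rcases List.mem_cons.mp hx with rfl | hx'
    · exact le_refl x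
    · exact (List.pairwise_cons.mp hl).1 x hx'
  rcases eq_or_lt_of_le ha2 with ha2' | ha3
  · -- a = 2, so b = 1 and all of b :: l equals 1; sums give contradiction
    have hsl : ((b :: l).map (fun x => x - 1)).sum = 0 := by
      apply List.sum_eq_zero
      intro y hy
      simp only [List.mem_map] at hy
      obtain ⟨x, hx, rfl⟩ := hy
      have := hlle x hx
      have := hlpos x hx
      omega
    rw [hsl] at hsum
    simp only [List.map_cons, List.sum_cons] at hsum
    omega
  · -- 3 ≤ a
    set n := 2*a - 1 with hn
    have hodd : Odd n := ⟨a - 1, by omega⟩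
    have h5 : 5 ≤ n := by omega
    obtain ⟨p, hp, hpdvd, hpnot⟩ := bang hodd h5
    have hpk : p ∣ ((a :: k).map (fun x => 2 ^ (2 * x - 1) + 1)).prod := by
      simp only [List.map_cons, List.prod_cons]
      exact Dvd.dvd.mul_right hpdvd _
    rw [hprod] at hpk
    obtain ⟨y, hy, hpy⟩ := (Prime.dvd_prod_iff hp.prime).mp hpk
    simp only [List.mem_map] at hy
    obtain ⟨x, hx, rfl⟩ := hy
    have hxb : x ≤ b := hlle x hx
    have hx1 : 1 ≤ x := hlpos x hx
    exact hpnot (2*x - 1) (by omega) (by omega) hpy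

/-- If two weakly decreasing tuples of positive integers (given as sorted lists)
have the same sum of `k - 1`'s and the same product of `2^(2k-1) + 1`'s, then
they are equal (in particular they have the same length). -/
theorem eq_of_sum_eq_of_prod_eq (k l : List ℕ)
    (hk : k.Pairwise (· ≥ ·)) (hl : l.Pairwise (· ≥ ·))
    (hkpos : ∀ x ∈ k, 1 ≤ x) (hlpos : ∀ x ∈ l, 1 ≤ x)
    (hsum : (k.map (fun x => x - 1)).sum = (l.map (fun x => x - 1)).sum)
    (hprod : (k.map (fun x => 2 ^ (2 * x - 1) + 1)).prod
           = (l.map (fun x => 2 ^ (2 * x - 1) + 1)).prod) :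
    k = l := by
  induction k generalizing l with
  | nil =>
    cases l with
    | nil => rfl
    | cons b l' =>
      exfalso
      simp only [List.map_nil, List.prod_nil, List.map_cons, List.prod_cons] at hprod
      have h3 : 3 ≤ 2 ^ (2*b-1) + 1 := factor_ge_three (hlpos b (List.mem_cons_self))
      have hpos := prod_pos_aux l'
      nlinarith
  | cons a k' ih =>
    cases l with
    | nil =>
      exfalso
      simp only [List.map_nil, List.prod_nil, List.map_cons, List.prod_cons] at hprod
      have h3 : 3 ≤ 2 ^ (2*a-1) + 1 := factor_ge_three (hkpos a (List.mem_cons_self))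
      have hpos := prod_pos_aux k'
      nlinarith
    | cons b l' =>
      rcases lt_trichotomy a b with h | h | h
      · exact (contra_case b a l' k' hl hk hlpos hkpos hsum.symm hprod.symm h).elim
      · subst h
        have hf : 0 < 2 ^ (2*a-1) + 1 := by positivity
        simp only [List.map_cons, List.sum_cons, List.prod_cons] at hsum hprod
        have hsum' : (k'.map (fun x => x - 1)).sum = (l'.map (fun x => x - 1)).sum := by
          omega
        have hprod' : (k'.map (fun x => 2 ^ (2 * x - 1) + 1)).prod
            = (l'.map (fun x => 2 ^ (2 * x - 1) + 1)).prod :=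
          Nat.eq_of_mul_eq_mul_left hf hprod
        have := ih l' (List.pairwise_cons.mp hk).2 (List.pairwise_cons.mp hl).2
          (fun x hx => hkpos x (List.mem_cons_of_mem a hx))
          (fun x hx => hlpos x (List.mem_cons_of_mem a hx))
          hsum' hprod'
        rw [this]
      · exact (contra_case a b k' l' hk hl hkpos hlpos hsum hprod h).elim
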